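/- arXiv:1303.5976 — 3 statements merged into one kernel-verified Lean document; each statement's English description precedes it below -/
import Mathlib

section
/- Let Y = {0,1}, let X be a measurable space, and let ℓ be the misclassification loss. If a hypotheses space H of measurable functions from X to Y is uniformly learnable, then the VC-dimension of H is finite. -/
/- Supervised binary classification setting: `X` a measurable space, labels in
`Bool` (i.e. Y = {0,1}), samples in `Z = X × Bool`, misclassification loss. -/

open MeasureTheory Filter
open scoped ENNReal

variable {X : Type*} [MeasurableSpace X]

/-- The misclassification loss `ℓ(t,y) = 1_{t ≠ y}`. -/
noncomputable def mloss (t y : Bool) : ℝ := if t = y then 0 else 1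

/-- `L(f,z) = ℓ(f(x),y)` for `z = (x,y)`. -/
noncomputable def lossOn (f : X → Bool) (z : X × Bool) : ℝ := mloss (f z.1) z.2

/-- The expected risk `R_ρ(f) = ∫ ℓ(f(x),y) dρ(x,y)`. -/
noncomputable def risk (ρ : Measure (X × Bool)) (f : X → Bool) : ℝ :=
  ∫ z, lossOn f z ∂ρ

/-- The empirical risk `R_n(f) = (1/n) Σ_i ℓ(f(x_i),y_i)`. -/
noncomputable def empRisk {n : ℕ} (zs : Fin n → X × Bool) (f : X → Bool) : ℝ :=
  (1 / (n : ℝ)) * ∑ i : Fin n, lossOn f (zs i)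

/-- The distribution `ρ^n` of i.i.d. training sets of size `n`. -/
noncomputable def trainM (ρ : Measure (X × Bool)) (n : ℕ) :
    Measure (Fin n → X × Bool) :=
  Measure.pi fun _ => ρ

/-- A learning algorithm on a hypotheses space `H`: a map from training sets
(of any size) to elements of `H`, measurable on each `Z^n`. -/
structure LearningAlg (H : Set (X → Bool)) where
  toFun : (n : ℕ) → (Fin n → X × Bool) → (X → Bool)
  mem_hyp : ∀ (n : ℕ) (zs : Fin n → X × Bool), toFun n zs ∈ H
  measurable : ∀ n : ℕ, Measurable (toFun n)

/-- `A` is uniformly consistent: for all `ε > 0`,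
`sup_ρ ρ^n {z_n : R_ρ(A_{z_n}) − inf_H R_ρ > ε} → 0` as `n → ∞`. -/
def UnifConsistent {H : Set (X → Bool)} (A : LearningAlg H) : Prop :=
  ∀ ε : ℝ, 0 < ε →
    Tendsto
      (fun n : ℕ => ⨆ ρ : ProbabilityMeasure (X × Bool),
        trainM (ρ : Measure (X × Bool)) n
          {zs | risk (ρ : Measure (X × Bool)) (A.toFun n zs) -
              ⨅ f : H, risk (ρ : Measure (X × Bool)) ↑f > ε})
      atTop (nhds 0)

/-- `H` is uniformly learnable if there is a uniformly consistent algorithm on it. -/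
def UnifLearnable (H : Set (X → Bool)) : Prop :=
  ∃ A : LearningAlg H, UnifConsistent A

/-- `A` is an empirical risk minimization algorithm on `H`. -/
def IsERM {H : Set (X → Bool)} (A : LearningAlg H) : Prop :=
  ∀ (n : ℕ) (zs : Fin n → X × Bool), ∀ f ∈ H, empRisk zs (A.toFun n zs) ≤ empRisk zs f

/-- `H` is a uniform Glivenko–Cantelli class: for all `ε > 0`,
`sup_ρ ρ^n {z_n : sup_{f∈H} |R_ρ(f) − R_n(f)| > ε} → 0` as `n → ∞`. -/
def IsUGC (H : Set (X → Bool)) : Prop :=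
  ∀ ε : ℝ, 0 < ε →
    Tendsto
      (fun n : ℕ => ⨆ ρ : ProbabilityMeasure (X × Bool),
        trainM (ρ : Measure (X × Bool)) n
          {zs | ∃ f ∈ H, ε < |risk (ρ : Measure (X × Bool)) f - empRisk zs f|})
      atTop (nhds 0)

/-- `H` shatters a finite set `S`: for every `E ⊆ S` some `f ∈ H` is `0` on `E`
and `1` on `S \ E`. -/
def Shatters (H : Set (X → Bool)) (S : Finset X) : Prop :=
  ∀ E ⊆ S, ∃ f ∈ H, (∀ x ∈ E, f x = false) ∧ (∀ x ∈ S, x ∉ E → f x = true)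

/-- The VC-dimension of `H` is finite. -/
def VCFinite (H : Set (X → Bool)) : Prop :=
  ∃ d : ℕ, ∀ S : Finset X, Shatters H S → S.card ≤ d

/-- `A` is uniformly CV_loo stable: there are `β_n → 0`, `δ_n → 0` with
`sup_ρ ρ^n {z_n : |L(A_{z_n^i}, z_i) − L(A_{z_n}, z_i)| > β_n} ≤ δ_n`
for all `n` and all `i`, where `z_n^i` is `z_n` with the `i`-th point removed. -/
def CVlooStable {H : Set (X → Bool)} (A : LearningAlg H) : Prop :=
  ∃ β δ : ℕ → ℝ, Tendsto β atTop (nhds 0) ∧ Tendsto δ atTop (nhds 0) ∧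
    ∀ (n : ℕ) (i : Fin (n + 1)) (ρ : ProbabilityMeasure (X × Bool)),
      trainM (ρ : Measure (X × Bool)) (n + 1)
          {zs | β (n + 1) <
            |lossOn (A.toFun n (zs ∘ i.succAbove)) (zs i) -
              lossOn (A.toFun (n + 1) zs) (zs i)|}
        ≤ ENNReal.ofReal (δ (n + 1))

/-- `H` is universal: for every distribution, the infimum of the risk over `H`
agrees with the infimum over all measurable functions. -/
def Universal (H : Set (X → Bool)) : Prop :=
  ∀ ρ : ProbabilityMeasure (X × Bool),
    (⨅ f : {g : X → Bool // Measurable g}, risk (ρ : Measure (X × Bool)) f.1) =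
      ⨅ f : H, risk (ρ : Measure (X × Bool)) ↑f


namespace VCProof

open Finset

lemma lossOn_nonneg (g : X → Bool) (z : X × Bool) : 0 ≤ lossOn g z := by
  unfold lossOn mloss; split <;> norm_num

lemma risk_nonneg (ρ : Measure (X × Bool)) (g : X → Bool) : 0 ≤ risk ρ g :=
  integral_nonneg (lossOn_nonneg g)

lemma lossOn_eq_indicator (g : X → Bool) :
    lossOn g = Set.indicator {z : X × Bool | g z.1 ≠ z.2} 1 := by
  funext z
  simp only [lossOn, mloss, Set.indicator_apply, Set.mem_setOf_eq, Pi.one_apply]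
  by_cases h : g z.1 = z.2 <;> simp [h]

lemma measurableSet_err (g : X → Bool) (hg : Measurable g) :
    MeasurableSet {z : X × Bool | g z.1 ≠ z.2} := by
  have : {z : X × Bool | g z.1 ≠ z.2}
      = (fun z : X × Bool => (g z.1, z.2)) ⁻¹' {p : Bool × Bool | p.1 ≠ p.2} := rfl
  rw [this]
  exact ((hg.comp measurable_fst).prodMk measurable_snd)
    (Set.Finite.measurableSet (Set.toFinite _))

lemma risk_eq_toReal (ρ : Measure (X × Bool)) (g : X → Bool) (hg : Measurable g) :
    risk ρ g = (ρ {z : X × Bool | g z.1 ≠ z.2}).toReal := by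
  rw [risk, lossOn_eq_indicator, integral_indicator_one (measurableSet_err g hg)]
  rfl

noncomputable def labMeas (S : Finset X) (c : ↥S → Bool) : Measure (X × Bool) :=
  (S.card : ℝ≥0∞)⁻¹ • ∑ x : ↥S, Measure.dirac ((x : X), c x)

lemma labMeas_isProb (S : Finset X) (hS : S.Nonempty) (c : ↥S → Bool) :
    IsProbabilityMeasure (labMeas S c) := by
  constructor
  rw [labMeas, Measure.smul_apply, Measure.finset_sum_apply]
  simp only [Measure.dirac_apply_of_mem (Set.mem_univ _)]
  rw [Finset.sum_const, card_univ, Fintype.card_coe, nsmul_eq_mul, mul_one, smul_eq_mul]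
  exact ENNReal.inv_mul_cancel (by exact_mod_cast hS.card_pos.ne') (ENNReal.natCast_ne_top _)

lemma risk_labMeas (S : Finset X) (c : ↥S → Bool) (g : X → Bool) (hg : Measurable g) :
    risk (labMeas S c) g
      = (S.card : ℝ)⁻¹ * ((univ.filter fun x : ↥S => g ↑x ≠ c x).card : ℕ) := by
  rw [risk_eq_toReal _ g hg]
  rw [labMeas, Measure.smul_apply, Measure.finset_sum_apply, smul_eq_mul]
  simp_rw [Measure.dirac_apply' _ (measurableSet_err g hg), Set.indicator_apply,
    Pi.one_apply]
  have : ∀ x : ↥S, (((x : X), c x) ∈ {z : X × Bool | g z.1 ≠ z.2}) = (g ↑x ≠ c x) := by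
    intro x; rfl
  simp_rw [this]
  rw [Finset.sum_boole]
  rw [ENNReal.toReal_mul, ENNReal.toReal_inv]
  norm_num

lemma trainM_labMeas (S : Finset X) (hS : S.Nonempty) (c : ↥S → Bool) (n : ℕ) :
    trainM (labMeas S c) n = ((S.card : ℝ≥0∞)⁻¹) ^ n
      • ∑ τ : Fin n → ↥S, Measure.dirac (fun i => ((τ i : X), c (τ i))) := by
  classical
  haveI := labMeas_isProb S hS c
  refine Measure.pi_eq fun s hs => ?_
  rw [Measure.smul_apply, Measure.finset_sum_apply, smul_eq_mul]
  have key : ∀ τ : Fin n → ↥S,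
      Measure.dirac (fun i => ((τ i : X), c (τ i))) (Set.pi Set.univ s)
        = ∏ i, Measure.dirac ((τ i : X), c (τ i)) (s i) := by
    intro τ
    by_cases h : ∀ i, ((τ i : X), c (τ i)) ∈ s i
    · rw [Measure.dirac_apply_of_mem (Set.mem_univ_pi.2 h)]
      exact (Finset.prod_eq_one fun i _ => Measure.dirac_apply_of_mem (h i)).symm
    · push_neg at h
      obtain ⟨i, hi⟩ := h
      rw [Measure.dirac_apply' _ (MeasurableSet.pi Set.countable_univ fun i _ => hs i),
        Set.indicator_of_notMem (by simpa [Set.mem_univ_pi] using ⟨i, hi⟩)]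
      refine (Finset.prod_eq_zero (Finset.mem_univ i) ?_).symm
      rw [Measure.dirac_apply' _ (hs i), Set.indicator_of_notMem hi]
  simp_rw [key]
  have hR : ∀ i : Fin n, labMeas S c (s i)
      = (S.card : ℝ≥0∞)⁻¹ * ∑ x : ↥S, Measure.dirac ((x : X), c x) (s i) := by
    intro i
    rw [labMeas, Measure.smul_apply, Measure.finset_sum_apply, smul_eq_mul]
  simp_rw [hR]
  have hswap := Finset.prod_univ_sum (κ := fun _ : Fin n => ↥S) (fun _ => univ)
    (fun i j => Measure.dirac ((j : X), c j) (s i))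
  rw [Finset.prod_mul_distrib, Finset.prod_const, card_univ, Fintype.card_fin, hswap,
    Fintype.piFinset_univ]

open scoped Classical in
lemma sum_bound (S : Finset X) (n : ℕ) (Alg : (Fin n → X × Bool) → (X → Bool)) :
    S.card * (S.card - 1) ^ n * 2 ^ (S.card - 1) ≤
      ∑ c : ↥S → Bool, ∑ τ : Fin n → ↥S,
        (univ.filter fun x : ↥S =>
          Alg (fun i => ((τ i : X), c (τ i))) ↑x ≠ c x).card := by
  have hrw : ∀ (c : ↥S → Bool) (τ : Fin n → ↥S),
      (univ.filter fun x : ↥S => Alg (fun i => ((τ i : X), c (τ i))) ↑x ≠ c x).card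
        = ∑ x : ↥S, if Alg (fun i => ((τ i : X), c (τ i))) ↑x ≠ c x then 1 else 0 := by
    intro c τ; rw [Finset.card_filter]
  simp_rw [hrw]
  have swap1 : ∀ c : ↥S → Bool,
      (∑ τ : Fin n → ↥S, ∑ x : ↥S,
        if Alg (fun i => ((τ i : X), c (τ i))) ↑x ≠ c x then 1 else 0)
      = ∑ x : ↥S, ∑ τ : Fin n → ↥S,
        if Alg (fun i => ((τ i : X), c (τ i))) ↑x ≠ c x then 1 else 0 :=
    fun c => Finset.sum_comm
  simp_rw [swap1]
  rw [Finset.sum_comm]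
  have key : ∀ x : ↥S,
      (S.card - 1) ^ n * 2 ^ (S.card - 1) ≤
        ∑ c : ↥S → Bool, ∑ τ : Fin n → ↥S,
          if Alg (fun i => ((τ i : X), c (τ i))) ↑x ≠ c x then 1 else 0 := by
    intro x
    rw [Finset.sum_comm]
    have hcard1 : Fintype.card {j : ↥S // j ≠ x} = S.card - 1 := by
      rw [Fintype.card_subtype_compl, Fintype.card_subtype_eq, Fintype.card_coe]
    set emb : (Fin n → {j : ↥S // j ≠ x}) → (Fin n → ↥S) :=
      fun σ i => (σ i : ↥S) with hemb
    have hinj : Function.Injective emb := by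
      intro a b hab
      funext i
      have : (a i : ↥S) = (b i : ↥S) := congrFun hab i
      exact Subtype.ext this
    have hinner : ∀ σ : Fin n → {j : ↥S // j ≠ x},
        (∑ c : ↥S → Bool,
          if Alg (fun i => ((emb σ i : X), c (emb σ i))) ↑x ≠ c x then 1 else 0)
          = 2 ^ (S.card - 1) := by
      intro σ
      rw [← Equiv.sum_comp (Equiv.funSplitAt x Bool).symm
        (fun c : ↥S → Bool =>
          if Alg (fun i => ((emb σ i : X), c (emb σ i))) ↑x ≠ c x then 1 else 0)]
      rw [Fintype.sum_prod_type]
      have hx : ∀ (b : Bool) (d : {j : ↥S // j ≠ x} → Bool),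
          (Equiv.funSplitAt x Bool).symm (b, d) x = b := by
        intro b d; rw [Equiv.funSplitAt_symm_apply, dif_pos rfl]
      have hz : ∀ (b : Bool) (d : {j : ↥S // j ≠ x} → Bool) (i : Fin n),
          (Equiv.funSplitAt x Bool).symm (b, d) (emb σ i) = d (σ i) := by
        intro b d i
        rw [Equiv.funSplitAt_symm_apply, dif_neg (σ i).2, Subtype.coe_eta]
      have hstep : ∀ (b : Bool) (d : {j : ↥S // j ≠ x} → Bool),
          (if Alg (fun i => ((emb σ i : X),
              (Equiv.funSplitAt x Bool).symm (b, d) (emb σ i))) ↑x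
              ≠ (Equiv.funSplitAt x Bool).symm (b, d) x then 1 else 0)
          = if Alg (fun i => ((emb σ i : X), d (σ i))) ↑x ≠ b then 1 else 0 := by
        intro b d
        simp_rw [hx, hz]
      simp_rw [hstep]
      rw [Finset.sum_comm]
      have hone : ∀ d : {j : ↥S // j ≠ x} → Bool,
          (∑ b : Bool, if Alg (fun i => ((emb σ i : X), d (σ i))) ↑x ≠ b then 1 else 0)
            = 1 := by
        intro d
        rw [Fintype.sum_bool]
        cases Alg (fun i => ((emb σ i : X), d (σ i))) ↑x <;> simp
      simp_rw [hone]
      rw [Finset.sum_const, card_univ, Fintype.card_fun, Fintype.card_bool, hcard1,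
        smul_eq_mul, mul_one]
    calc (S.card - 1) ^ n * 2 ^ (S.card - 1)
        = ∑ _σ : Fin n → {j : ↥S // j ≠ x}, 2 ^ (S.card - 1) := by
          rw [Finset.sum_const, card_univ, Fintype.card_fun, hcard1, Fintype.card_fin,
            smul_eq_mul]
      _ = ∑ σ : Fin n → {j : ↥S // j ≠ x},
            ∑ c : ↥S → Bool,
              if Alg (fun i => ((emb σ i : X), c (emb σ i))) ↑x ≠ c x then 1 else 0 := by
          simp_rw [hinner]
      _ = ∑ τ ∈ univ.image emb,
            ∑ c : ↥S → Bool,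
              if Alg (fun i => ((τ i : X), c (τ i))) ↑x ≠ c x then 1 else 0 := by
          rw [Finset.sum_image (fun a _ b _ h => hinj h)]
      _ ≤ _ := Finset.sum_le_sum_of_subset (subset_univ _)
  calc S.card * (S.card - 1) ^ n * 2 ^ (S.card - 1)
      = ∑ _x : ↥S, (S.card - 1) ^ n * 2 ^ (S.card - 1) := by
        rw [Finset.sum_const, card_univ, Fintype.card_coe, smul_eq_mul, mul_assoc]
    _ ≤ _ := Finset.sum_le_sum fun x _ => key x

lemma bernoulli_nat (n : ℕ) (hn : 1 ≤ n) : (2*n)^n ≤ 2 * (2*n - 1)^n := by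
  have hnR : (1:ℝ) ≤ (n:ℝ) := by exact_mod_cast hn
  have hpos : (0:ℝ) < 2*(n:ℝ) := by linarith
  have ha : (-2:ℝ) ≤ -(1/(2*(n:ℝ))) := by
    rw [neg_le_neg_iff]
    rw [div_le_iff₀ hpos]
    linarith
  have h1 := one_add_mul_le_pow ha n
  have h2 : (1:ℝ) + (n:ℝ) * -(1/(2*(n:ℝ))) = 1/2 := by
    field_simp
    ring
  rw [h2] at h1
  have h3 : (1:ℝ) + -(1/(2*(n:ℝ))) = (2*(n:ℝ) - 1)/(2*(n:ℝ)) := by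
    field_simp
    ring
  rw [h3, div_pow] at h1
  rw [le_div_iff₀ (by positivity)] at h1
  have h4 : ((2*n:ℕ):ℝ)^n ≤ 2 * ((2*n - 1:ℕ):ℝ)^n := by
    rw [Nat.cast_sub (by omega)]
    push_cast
    nlinarith [h1]
  exact_mod_cast h4

end VCProof

/-- If a hypotheses space `H` of measurable binary classifiers is
uniformly learnable, then its VC-dimension is finite. -/
theorem learnable_implies_vcFinite
    (H : Set (X → Bool)) (hH : ∀ f ∈ H, Measurable f) (hL : UnifLearnable H) :
    VCFinite H := by
  classical
  by_contra hVC
  rw [VCFinite] at hVC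
  push_neg at hVC
  obtain ⟨A, hA⟩ := hL
  have htend := hA (1/8) (by norm_num)
  have hev := htend.eventually_lt_const (show (0:ℝ≥0∞) < 1/8 by norm_num)
  obtain ⟨n, hlt, hn1⟩ := (hev.and (Filter.eventually_ge_atTop 1)).exists
  obtain ⟨S₀, hSh₀, hcard₀⟩ := hVC (2 * n)
  obtain ⟨S, hSsub, hScard⟩ := S₀.exists_subset_card_eq hcard₀.le
  obtain ⟨m, hm⟩ : ∃ m, m = 2 * n := ⟨2 * n, rfl⟩
  have hScard' : S.card = m := by omega
  have hm2 : 2 ≤ m := by omega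
  have hSne : S.Nonempty := Finset.card_pos.mp (by omega)
  have hSh : Shatters H S := by
    intro E hE
    obtain ⟨f, hf, h0, h1⟩ := hSh₀ E (hE.trans hSsub)
    exact ⟨f, hf, h0, fun x hx hxE => h1 x (hSsub hx) hxE⟩
  have hchoice : ∀ c : ↥S → Bool, ∃ f ∈ H, ∀ x : ↥S, f ↑x = c x := by
    intro c
    obtain ⟨f, hf, h0, h1⟩ := hSh (S.filter fun a => ∀ h : a ∈ S, c ⟨a, h⟩ = false)
      (S.filter_subset _)
    refine ⟨f, hf, fun x => ?_⟩
    cases hcx : c x with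
    | false =>
        refine h0 _ (Finset.mem_filter.2 ⟨x.2, fun h => ?_⟩)
        rwa [Subtype.coe_eta]
    | true =>
        refine h1 ↑x x.2 fun hmem => ?_
        have hx2 := (Finset.mem_filter.1 hmem).2 x.2
        rw [Subtype.coe_eta, hcx] at hx2
        exact Bool.noConfusion hx2
  choose F hFH hFc using hchoice
  haveI : Nonempty ↥H := ⟨⟨F (fun _ => true), hFH _⟩⟩
  have hinf : ∀ c : ↥S → Bool, (⨅ f : H, risk (VCProof.labMeas S c) ↑f) = 0 := by
    intro c
    have h0 : risk (VCProof.labMeas S c) (F c) = 0 := by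
      rw [VCProof.risk_labMeas S c _ (hH _ (hFH c))]
      have he : (Finset.univ.filter fun x : ↥S => F c ↑x ≠ c x) = ∅ :=
        Finset.filter_eq_empty_iff.2 fun x _ => by simp [hFc c x]
      rw [he]
      simp
    refine le_antisymm ?_ (le_ciInf fun f => VCProof.risk_nonneg _ _)
    have hb : BddBelow (Set.range fun f : H => risk (VCProof.labMeas S c) ↑f) := by
      refine ⟨0, fun r hr => ?_⟩
      obtain ⟨f, rfl⟩ := hr
      exact VCProof.risk_nonneg _ _
    exact (ciInf_le hb (⟨F c, hFH c⟩ : H)).trans h0.le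
  -- counting
  have hm1 : 0 < m - 1 := by omega
  have hmpos0 : 0 < m := by omega
  have hK1 : 1 ≤ m * (m - 1) ^ n := by
    have h1 : 1 ≤ (m - 1) ^ n := Nat.one_le_pow _ _ hm1
    calc 1 = 1 * 1 := by ring
      _ ≤ m * (m - 1) ^ n := Nat.mul_le_mul hmpos0 h1
  have hsum : m * (m - 1) ^ n * 2 ^ (m - 1) ≤
      ∑ c : ↥S → Bool, ∑ τ : Fin n → ↥S,
        (Finset.univ.filter fun x : ↥S =>
          A.toFun n (fun i => ((τ i : X), c (τ i))) ↑x ≠ c x).card := by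
    have h := VCProof.sum_bound S n (A.toFun n)
    rwa [hScard'] at h
  have hstep1 : ∃ c : ↥S → Bool, m * (m - 1) ^ n ≤
      2 * ∑ τ : Fin n → ↥S,
        (Finset.univ.filter fun x : ↥S =>
          A.toFun n (fun i => ((τ i : X), c (τ i))) ↑x ≠ c x).card := by
    by_contra hcon
    push_neg at hcon
    have hub : ∀ c : ↥S → Bool,
        2 * (∑ τ : Fin n → ↥S,
          (Finset.univ.filter fun x : ↥S =>
            A.toFun n (fun i => ((τ i : X), c (τ i))) ↑x ≠ c x).card)
          ≤ m * (m - 1) ^ n - 1 :=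
      fun c => Nat.le_sub_one_of_lt (hcon c)
    have hcardc : Fintype.card (↥S → Bool) = 2 ^ m := by
      rw [Fintype.card_fun, Fintype.card_bool, Fintype.card_coe, hScard']
    have h2 : ∑ c : ↥S → Bool,
        (2 * ∑ τ : Fin n → ↥S,
          (Finset.univ.filter fun x : ↥S =>
            A.toFun n (fun i => ((τ i : X), c (τ i))) ↑x ≠ c x).card)
        ≤ 2 ^ m * (m * (m - 1) ^ n - 1) := by
      calc ∑ c : ↥S → Bool,
          (2 * ∑ τ : Fin n → ↥S,
            (Finset.univ.filter fun x : ↥S =>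
              A.toFun n (fun i => ((τ i : X), c (τ i))) ↑x ≠ c x).card)
          ≤ ∑ _c : ↥S → Bool, (m * (m - 1) ^ n - 1) :=
            Finset.sum_le_sum fun c _ => hub c
        _ = 2 ^ m * (m * (m - 1) ^ n - 1) := by
            rw [Finset.sum_const, Finset.card_univ, hcardc, smul_eq_mul]
    have h1 : 2 ^ m * (m * (m - 1) ^ n) ≤ ∑ c : ↥S → Bool,
        (2 * ∑ τ : Fin n → ↥S,
          (Finset.univ.filter fun x : ↥S =>
            A.toFun n (fun i => ((τ i : X), c (τ i))) ↑x ≠ c x).card) := by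
      rw [← Finset.mul_sum]
      obtain ⟨k, hk⟩ : ∃ k, m = k + 1 := ⟨m - 1, (Nat.succ_pred_eq_of_pos hmpos0).symm⟩
      have he : 2 ^ m * (m * (m - 1) ^ n) = 2 * (m * (m - 1) ^ n * 2 ^ (m - 1)) := by
        rw [hk, Nat.add_sub_cancel, pow_succ]
        ring
      rw [he]
      exact Nat.mul_le_mul_left 2 hsum
    have hfin := le_trans h1 h2
    have hle2 := Nat.le_of_mul_le_mul_left hfin (Nat.two_pow_pos m)
    have hlt2 : m * (m - 1) ^ n - 1 < m * (m - 1) ^ n :=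
      Nat.sub_lt (Nat.lt_of_lt_of_le Nat.one_pos hK1) Nat.one_pos
    exact absurd hle2 (Nat.not_le.2 hlt2)
  obtain ⟨c, hc⟩ := hstep1
  have hτcard : Fintype.card (Fin n → ↥S) = m ^ n := by
    rw [Fintype.card_fun, Fintype.card_coe, Fintype.card_fin, hScard']
  have hNle : ∀ τ : Fin n → ↥S,
      (Finset.univ.filter fun x : ↥S =>
        A.toFun n (fun i => ((τ i : X), c (τ i))) ↑x ≠ c x).card ≤ m := by
    intro τ
    calc (Finset.univ.filter fun x : ↥S =>
          A.toFun n (fun i => ((τ i : X), c (τ i))) ↑x ≠ c x).card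
        ≤ (Finset.univ : Finset ↥S).card := Finset.card_filter_le _ _
      _ = m := by rw [Finset.card_univ, Fintype.card_coe, hScard']
  have hsplit : 8 * ∑ τ : Fin n → ↥S,
      (Finset.univ.filter fun x : ↥S =>
        A.toFun n (fun i => ((τ i : X), c (τ i))) ↑x ≠ c x).card
      ≤ (Finset.univ.filter (fun τ : Fin n → ↥S =>
          m < 8 * (Finset.univ.filter fun x : ↥S =>
            A.toFun n (fun i => ((τ i : X), c (τ i))) ↑x ≠ c x).card)).card * (8 * m)
        + m ^ n * m := by
    rw [Finset.mul_sum]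
    rw [← Finset.sum_filter_add_sum_filter_not Finset.univ
      (fun τ : Fin n → ↥S =>
        m < 8 * (Finset.univ.filter fun x : ↥S =>
          A.toFun n (fun i => ((τ i : X), c (τ i))) ↑x ≠ c x).card)
      (fun τ : Fin n → ↥S =>
        8 * (Finset.univ.filter fun x : ↥S =>
          A.toFun n (fun i => ((τ i : X), c (τ i))) ↑x ≠ c x).card)]
    refine Nat.add_le_add ?_ ?_
    · calc ∑ τ ∈ Finset.univ.filter (fun τ : Fin n → ↥S =>
            m < 8 * (Finset.univ.filter fun x : ↥S =>
              A.toFun n (fun i => ((τ i : X), c (τ i))) ↑x ≠ c x).card),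
            8 * (Finset.univ.filter fun x : ↥S =>
              A.toFun n (fun i => ((τ i : X), c (τ i))) ↑x ≠ c x).card
          ≤ ∑ _τ ∈ Finset.univ.filter (fun τ : Fin n → ↥S =>
            m < 8 * (Finset.univ.filter fun x : ↥S =>
              A.toFun n (fun i => ((τ i : X), c (τ i))) ↑x ≠ c x).card), 8 * m :=
            Finset.sum_le_sum fun τ _ => Nat.mul_le_mul_left 8 (hNle τ)
        _ = _ := by rw [Finset.sum_const, smul_eq_mul]
    · calc ∑ τ ∈ Finset.univ.filter (fun τ : Fin n → ↥S =>
            ¬ (m < 8 * (Finset.univ.filter fun x : ↥S =>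
              A.toFun n (fun i => ((τ i : X), c (τ i))) ↑x ≠ c x).card)),
            8 * (Finset.univ.filter fun x : ↥S =>
              A.toFun n (fun i => ((τ i : X), c (τ i))) ↑x ≠ c x).card
          ≤ ∑ _τ ∈ Finset.univ.filter (fun τ : Fin n → ↥S =>
            ¬ (m < 8 * (Finset.univ.filter fun x : ↥S =>
              A.toFun n (fun i => ((τ i : X), c (τ i))) ↑x ≠ c x).card)), m := by
            refine Finset.sum_le_sum fun τ hτ => ?_
            exact Nat.le_of_not_lt (Finset.mem_filter.1 hτ).2
        _ ≤ m ^ n * m := by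
            rw [Finset.sum_const, smul_eq_mul]
            refine Nat.mul_le_mul_right m ?_
            calc _ ≤ (Finset.univ : Finset (Fin n → ↥S)).card := Finset.card_filter_le _ _
              _ = m ^ n := by rw [Finset.card_univ, hτcard]
  have hmb : m ^ n ≤ 2 * (m - 1) ^ n := by
    have h := VCProof.bernoulli_nat n hn1
    rw [← hm] at h
    exact h
  have hlow8 : 2 * (m ^ n * m) ≤ 8 * ∑ τ : Fin n → ↥S,
      (Finset.univ.filter fun x : ↥S =>
        A.toFun n (fun i => ((τ i : X), c (τ i))) ↑x ≠ c x).card := by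
    calc 2 * (m ^ n * m) = 2 * (m * m ^ n) := by ring
      _ ≤ 2 * (m * (2 * (m - 1) ^ n)) :=
          Nat.mul_le_mul_left 2 (Nat.mul_le_mul_left m hmb)
      _ = 4 * (m * (m - 1) ^ n) := by ring
      _ ≤ 4 * (2 * ∑ τ : Fin n → ↥S,
          (Finset.univ.filter fun x : ↥S =>
            A.toFun n (fun i => ((τ i : X), c (τ i))) ↑x ≠ c x).card) :=
          Nat.mul_le_mul_left 4 hc
      _ = _ := by ring
  have hBcard : m ^ n ≤ 8 * (Finset.univ.filter (fun τ : Fin n → ↥S =>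
      m < 8 * (Finset.univ.filter fun x : ↥S =>
        A.toFun n (fun i => ((τ i : X), c (τ i))) ↑x ≠ c x).card)).card := by
    have h := le_trans hlow8 hsplit
    have h3 : m ^ n * m ≤ (8 * (Finset.univ.filter (fun τ : Fin n → ↥S =>
        m < 8 * (Finset.univ.filter fun x : ↥S =>
          A.toFun n (fun i => ((τ i : X), c (τ i))) ↑x ≠ c x).card)).card) * m := by
      have he : (Finset.univ.filter (fun τ : Fin n → ↥S =>
          m < 8 * (Finset.univ.filter fun x : ↥S =>
            A.toFun n (fun i => ((τ i : X), c (τ i))) ↑x ≠ c x).card)).card * (8 * m)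
          = (8 * (Finset.univ.filter (fun τ : Fin n → ↥S =>
            m < 8 * (Finset.univ.filter fun x : ↥S =>
              A.toFun n (fun i => ((τ i : X), c (τ i))) ↑x ≠ c x).card)).card) * m := by
        ring
      have h4 : m ^ n * m + m ^ n * m ≤ (Finset.univ.filter (fun τ : Fin n → ↥S =>
          m < 8 * (Finset.univ.filter fun x : ↥S =>
            A.toFun n (fun i => ((τ i : X), c (τ i))) ↑x ≠ c x).card)).card * (8 * m)
          + m ^ n * m := by
        calc m ^ n * m + m ^ n * m = 2 * (m ^ n * m) := by ring
          _ ≤ _ := h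
      have h5 := le_of_add_le_add_right h4
      calc m ^ n * m ≤ _ := h5
        _ = _ := he
    exact Nat.le_of_mul_le_mul_right h3 hmpos0
  -- the bad event
  have hmem : ∀ τ ∈ Finset.univ.filter (fun τ : Fin n → ↥S =>
      m < 8 * (Finset.univ.filter fun x : ↥S =>
        A.toFun n (fun i => ((τ i : X), c (τ i))) ↑x ≠ c x).card),
      (fun i => ((τ i : X), c (τ i))) ∈ {zs : Fin n → X × Bool |
        risk (VCProof.labMeas S c) (A.toFun n zs)
          - ⨅ f : H, risk (VCProof.labMeas S c) ↑f > 1/8} := by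
    intro τ hτ
    have hτ' := (Finset.mem_filter.1 hτ).2
    simp only [Set.mem_setOf_eq, hinf c, sub_zero]
    rw [VCProof.risk_labMeas S c _ (hH _ (A.mem_hyp n _)), hScard']
    have hmpos : (0:ℝ) < m := by exact_mod_cast hmpos0
    have hcast : (m:ℝ) < 8 * ((Finset.univ.filter fun x : ↥S =>
        A.toFun n (fun i => ((τ i : X), c (τ i))) ↑x ≠ c x).card : ℝ) := by
      exact_mod_cast hτ'
    rw [gt_iff_lt, inv_mul_eq_div, lt_div_iff₀ hmpos]
    linarith
  have hbound : (1/8 : ℝ≥0∞) ≤ trainM (VCProof.labMeas S c) n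
      {zs : Fin n → X × Bool |
        risk (VCProof.labMeas S c) (A.toFun n zs)
          - ⨅ f : H, risk (VCProof.labMeas S c) ↑f > 1/8} := by
    rw [VCProof.trainM_labMeas S hSne c n, Measure.smul_apply,
      Measure.finset_sum_apply, smul_eq_mul]
    have hlow : ((Finset.univ.filter (fun τ : Fin n → ↥S =>
        m < 8 * (Finset.univ.filter fun x : ↥S =>
          A.toFun n (fun i => ((τ i : X), c (τ i))) ↑x ≠ c x).card)).card : ℝ≥0∞)
        ≤ ∑ τ : Fin n → ↥S, Measure.dirac (fun i => ((τ i : X), c (τ i)))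
            {zs : Fin n → X × Bool |
              risk (VCProof.labMeas S c) (A.toFun n zs)
                - ⨅ f : H, risk (VCProof.labMeas S c) ↑f > 1/8} := by
      calc ((Finset.univ.filter (fun τ : Fin n → ↥S =>
          m < 8 * (Finset.univ.filter fun x : ↥S =>
            A.toFun n (fun i => ((τ i : X), c (τ i))) ↑x ≠ c x).card)).card : ℝ≥0∞)
          = ∑ τ ∈ Finset.univ.filter (fun τ : Fin n → ↥S =>
              m < 8 * (Finset.univ.filter fun x : ↥S =>
                A.toFun n (fun i => ((τ i : X), c (τ i))) ↑x ≠ c x).card), (1:ℝ≥0∞) := by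
            rw [Finset.sum_const, nsmul_eq_mul, mul_one]
        _ ≤ ∑ τ ∈ Finset.univ.filter (fun τ : Fin n → ↥S =>
              m < 8 * (Finset.univ.filter fun x : ↥S =>
                A.toFun n (fun i => ((τ i : X), c (τ i))) ↑x ≠ c x).card),
              Measure.dirac (fun i => ((τ i : X), c (τ i)))
                {zs : Fin n → X × Bool |
                  risk (VCProof.labMeas S c) (A.toFun n zs)
                    - ⨅ f : H, risk (VCProof.labMeas S c) ↑f > 1/8} := by
            refine Finset.sum_le_sum fun τ hτ => ?_
            rw [Measure.dirac_apply_of_mem (hmem τ hτ)]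
        _ ≤ _ := Finset.sum_le_sum_of_subset (Finset.subset_univ _)
    calc (1/8 : ℝ≥0∞)
        = ((S.card : ℝ≥0∞)⁻¹) ^ n * ((m ^ n : ℕ) / 8 : ℝ≥0∞) := by
          have hk0 : ((m ^ n : ℕ) : ℝ≥0∞) ≠ 0 :=
            Nat.cast_ne_zero.2 (Nat.pos_iff_ne_zero.1 (Nat.pow_pos (n := n) hmpos0))
          have hkt : ((m ^ n : ℕ) : ℝ≥0∞) ≠ ⊤ := ENNReal.natCast_ne_top _
          rw [hScard', ← ENNReal.inv_pow, ← Nat.cast_pow, ← mul_div_assoc,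
            ENNReal.inv_mul_cancel hk0 hkt]
        _ ≤ ((S.card : ℝ≥0∞)⁻¹) ^ n * ((Finset.univ.filter (fun τ : Fin n → ↥S =>
            m < 8 * (Finset.univ.filter fun x : ↥S =>
              A.toFun n (fun i => ((τ i : X), c (τ i))) ↑x ≠ c x).card)).card : ℝ≥0∞) := by
          refine mul_le_mul_right ?_ _
          rw [ENNReal.div_le_iff_le_mul (Or.inl (by norm_num)) (Or.inl (by norm_num))]
          calc ((m ^ n : ℕ) : ℝ≥0∞)
              ≤ ((8 * (Finset.univ.filter (fun τ : Fin n → ↥S =>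
                m < 8 * (Finset.univ.filter fun x : ↥S =>
                  A.toFun n (fun i => ((τ i : X), c (τ i))) ↑x ≠ c x).card)).card : ℕ) : ℝ≥0∞) :=
              Nat.cast_le.2 hBcard
            _ = _ := by push_cast; ring
        _ ≤ _ := mul_le_mul_right hlow _
  have hle := le_iSup (fun ρ : ProbabilityMeasure (X × Bool) =>
      trainM (ρ : Measure (X × Bool)) n
        {zs | risk (ρ : Measure (X × Bool)) (A.toFun n zs) -
            ⨅ f : H, risk (ρ : Measure (X × Bool)) ↑f > 1/8})
    (⟨VCProof.labMeas S c, VCProof.labMeas_isProb S hSne c⟩ : ProbabilityMeasure (X × Bool))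
  exact absurd (le_trans hbound hle) (not_le.2 hlt)
end

section
/- No free lunch theorem: let Y = {0,1}, let X be a measurable space such that there exists an atom-free probability measure μ on X, and let ℓ be the misclassification loss. If a hypotheses space H of measurable functions from X to Y is universal, then H is not uniformly learnable. -/
/- Supervised binary classification setting: `X` a measurable space, labels in
`Bool` (i.e. Y = {0,1}), samples in `Z = X × Bool`, misclassification loss. -/

open MeasureTheory Filter
open scoped ENNReal

variable {X : Type*} [MeasurableSpace X]

set_option linter.unusedSectionVars false

lemma mloss_nonneg (t y : Bool) : 0 ≤ mloss t y := by
  unfold mloss; split <;> norm_num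

lemma mloss_le_one (t y : Bool) : mloss t y ≤ 1 := by
  unfold mloss; split <;> norm_num

lemma mloss_self (t : Bool) : mloss t t = 0 := by simp [mloss]

lemma mloss_add_not (t y : Bool) : mloss t y + mloss t (!y) = 1 := by
  cases t <;> cases y <;> simp [mloss]

lemma lossOn_nonneg (f : X → Bool) (z : X × Bool) : 0 ≤ lossOn f z := mloss_nonneg _ _

lemma lossOn_le_one (f : X → Bool) (z : X × Bool) : lossOn f z ≤ 1 := mloss_le_one _ _

lemma measurable_lossOn {f : X → Bool} (hf : Measurable f) : Measurable (lossOn f) := by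
  have h : Measurable (fun z : X × Bool => (f z.1, z.2)) :=
    (hf.comp measurable_fst).prodMk measurable_snd
  have hs : MeasurableSet {p : Bool × Bool | p.1 = p.2} := by
    exact MeasurableSet.of_discrete
  have : Measurable fun z : X × Bool => if (f z.1, z.2) ∈ {p : Bool × Bool | p.1 = p.2} then (0:ℝ) else 1 :=
    Measurable.ite (h hs) measurable_const measurable_const
  show Measurable fun z : X × Bool => mloss (f z.1) z.2
  simpa [mloss, Set.mem_setOf_eq] using this

lemma risk_nonneg (ρ : Measure (X × Bool)) (f : X → Bool) : 0 ≤ risk ρ f :=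
  integral_nonneg fun z => lossOn_nonneg f z

/-- Existence of a sequence of points separated by measurable null sets. -/
lemma exists_sep_points (μ : Measure X) [IsProbabilityMeasure μ]
    (h0 : ∀ x : X, μ {x} = 0) :
    ∃ (pt : ℕ → X) (T : ℕ → Set X), (∀ k, MeasurableSet (T k)) ∧ (∀ k, pt k ∈ T k) ∧
      ∀ i k, i < k → pt k ∉ T i := by
  classical
  have hne : Nonempty X := by
    by_contra h
    have h1 : μ Set.univ = 1 := measure_univ
    rw [Set.univ_eq_empty_iff.mpr (not_nonempty_iff.mp h)] at h1
    simp at h1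
  let pick : Set X → X := fun s => if h : sᶜ.Nonempty then h.choose else Classical.arbitrary X
  let step : X × Set X → X × Set X := fun p =>
    (pick p.2, p.2 ∪ toMeasurable μ {pick p.2})
  let F : ℕ → X × Set X := fun k => step^[k+1] (Classical.arbitrary X, ∅)
  have hstep : ∀ p : X × Set X, MeasurableSet p.2 → μ p.2 = 0 →
      MeasurableSet (step p).2 ∧ μ (step p).2 = 0 ∧ p.2 ⊆ (step p).2 ∧
        (step p).1 ∈ (step p).2 ∧ (step p).1 ∉ p.2 := by
    intro p hm hμ0
    have hcne : p.2ᶜ.Nonempty := by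
      rcases Set.eq_empty_or_nonempty p.2ᶜ with h | h
      · exfalso
        have : p.2 = Set.univ := by
          rw [← Set.compl_empty, ← h, compl_compl]
        rw [this, measure_univ] at hμ0
        exact one_ne_zero hμ0
      · exact h
    have hpick : pick p.2 ∉ p.2 := by
      have : pick p.2 = hcne.choose := by simp [pick, dif_pos hcne]
      rw [this]
      exact hcne.choose_spec
    refine ⟨hm.union (measurableSet_toMeasurable _ _), ?_, Set.subset_union_left, ?_, hpick⟩
    · apply measure_union_null hμ0
      rw [measure_toMeasurable]
      exact h0 _
    · exact Set.mem_union_right _ (subset_toMeasurable _ _ rfl)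
  have hinv : ∀ k, MeasurableSet (F k).2 ∧ μ (F k).2 = 0 := by
    intro k
    induction k with
    | zero =>
      have h := hstep (Classical.arbitrary X, ∅) (by simp) (by simp)
      exact ⟨h.1, h.2.1⟩
    | succ k ih =>
      have hFk : F (k+1) = step (F k) := Function.iterate_succ_apply' _ _ _
      rw [hFk]
      exact ⟨(hstep _ ih.1 ih.2).1, (hstep _ ih.1 ih.2).2.1⟩
  have hmem : ∀ k, (F k).1 ∈ (F k).2 := by
    intro k
    cases k with
    | zero => exact (hstep (Classical.arbitrary X, ∅) (by simp) (by simp)).2.2.2.1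
    | succ k =>
      have hFk : F (k+1) = step (F k) := Function.iterate_succ_apply' _ _ _
      rw [hFk]
      exact (hstep _ (hinv k).1 (hinv k).2).2.2.2.1
  have hmono : ∀ a b : ℕ, a ≤ b → (F a).2 ⊆ (F b).2 := by
    intro a b hab
    induction b with
    | zero => simp_all
    | succ b ih =>
      rcases Nat.lt_or_ge a (b+1) with h | h
      · have h1 : (F a).2 ⊆ (F b).2 := ih (Nat.lt_succ_iff.mp h)
        have hFk : F (b+1) = step (F b) := Function.iterate_succ_apply' _ _ _
        rw [hFk]
        exact h1.trans (hstep _ (hinv b).1 (hinv b).2).2.2.1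
      · have : a = b + 1 := le_antisymm hab h
        subst this
        exact subset_rfl
  refine ⟨fun k => (F k).1, fun k => (F k).2, fun k => (hinv k).1, hmem, ?_⟩
  intro i k hik
  cases k with
  | zero => omega
  | succ k =>
    have hFk : F (k+1) = step (F k) := Function.iterate_succ_apply' _ _ _
    have hnew : (F (k+1)).1 ∉ (F k).2 := by
      rw [hFk]
      exact (hstep _ (hinv k).1 (hinv k).2).2.2.2.2
    intro hmem'
    exact hnew (hmono i k (Nat.lt_succ_iff.mp hik) hmem')

open Classical in
/-- Index of the first `T i`, `i < m-1`, containing `x`; defaults to `m-1`. -/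
noncomputable def nflBlk (T : ℕ → Set X) (m : ℕ) (hm : 0 < m) : X → Fin m := fun x =>
  if h : ∃ i, i < m - 1 ∧ x ∈ T i then
    ⟨Nat.find h, by have := (Nat.find_spec h).1; omega⟩
  else ⟨m - 1, by omega⟩

lemma nflBlk_pt {T : ℕ → Set X} {m : ℕ} (hm : 0 < m) (pt : ℕ → X)
    (hmem : ∀ k, pt k ∈ T k) (hnot : ∀ i k, i < k → pt k ∉ T i) (j : Fin m) :
    nflBlk T m hm (pt (j : ℕ)) = j := by
  classical
  unfold nflBlk
  by_cases hj : (j : ℕ) < m - 1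
  · have hex : ∃ i, i < m - 1 ∧ pt (j : ℕ) ∈ T i := ⟨j, hj, hmem j⟩
    rw [dif_pos hex]
    have hle : Nat.find hex ≤ (j : ℕ) := Nat.find_le ⟨hj, hmem j⟩
    have hge : (j : ℕ) ≤ Nat.find hex := by
      by_contra h
      push_neg at h
      exact hnot _ _ h (Nat.find_spec hex).2
    exact Fin.ext (le_antisymm hle hge)
  · have hnex : ¬ ∃ i, i < m - 1 ∧ pt (j : ℕ) ∈ T i := by
      rintro ⟨i, hi, hmemi⟩
      have : i < (j : ℕ) := by omega
      exact hnot i j this hmemi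
    rw [dif_neg hnex]
    have : (j : ℕ) = m - 1 := by have := j.isLt; omega
    exact Fin.ext (by simp [this])

lemma measurable_nflBlk {T : ℕ → Set X} {m : ℕ} (hm : 0 < m)
    (hT : ∀ k, MeasurableSet (T k)) : Measurable (nflBlk T m hm) := by
  classical
  apply measurable_to_countable'
  intro j
  by_cases hj : (j : ℕ) < m - 1
  · have hpre : nflBlk T m hm ⁻¹' {j} = T (j : ℕ) \ ⋃ i < (j : ℕ), T i := by
      ext x
      simp only [Set.mem_preimage, Set.mem_singleton_iff, Set.mem_diff, Set.mem_iUnion,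
        not_exists, exists_prop]
      unfold nflBlk
      constructor
      · intro hx
        by_cases hex : ∃ i, i < m - 1 ∧ x ∈ T i
        · rw [dif_pos hex] at hx
          have hval : Nat.find hex = (j : ℕ) := congrArg Fin.val hx
          constructor
          · rw [← hval]; exact (Nat.find_spec hex).2
          · rintro i ⟨hij, hxi⟩
            have h1 : i < m - 1 := by omega
            have := Nat.find_le (h := hex) ⟨h1, hxi⟩
            omega
        · rw [dif_neg hex] at hx
          have : m - 1 = (j : ℕ) := congrArg Fin.val hx
          omega
      · rintro ⟨hxj, hlt⟩
        have hex : ∃ i, i < m - 1 ∧ x ∈ T i := ⟨j, hj, hxj⟩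
        rw [dif_pos hex]
        refine Fin.ext (le_antisymm (Nat.find_le ⟨hj, hxj⟩) ?_)
        by_contra h
        push_neg at h
        exact hlt _ ⟨h, (Nat.find_spec hex).2⟩
    rw [hpre]
    exact (hT _).diff (MeasurableSet.biUnion (Set.to_countable _) fun i _ => hT i)
  · have hpre : nflBlk T m hm ⁻¹' {j} = (⋃ i < m - 1, T i)ᶜ := by
      ext x
      simp only [Set.mem_preimage, Set.mem_singleton_iff, Set.mem_compl_iff, Set.mem_iUnion,
        not_exists, exists_prop]
      unfold nflBlk
      constructor
      · intro hx
        by_cases hex : ∃ i, i < m - 1 ∧ x ∈ T i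
        · rw [dif_pos hex] at hx
          have hval : Nat.find hex = (j : ℕ) := congrArg Fin.val hx
          have := (Nat.find_spec hex).1
          omega
        · rintro i ⟨hi, hxi⟩
          exact hex ⟨i, hi, hxi⟩
      · intro hx
        have hex : ¬ ∃ i, i < m - 1 ∧ x ∈ T i := by
          rintro ⟨i, hi, hxi⟩
          exact hx i ⟨hi, hxi⟩
        rw [dif_neg hex]
        have : (j : ℕ) = m - 1 := by have := j.isLt; omega
        exact Fin.ext (by simp [this])
    rw [hpre]
    exact (MeasurableSet.biUnion (Set.to_countable _) fun i _ => hT i).compl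

lemma nfl_key {H : Set (X → Bool)} (hH : ∀ f ∈ H, Measurable f) (huniv : Universal H)
    (A : LearningAlg H) (pt : ℕ → X) (T : ℕ → Set X) (hT : ∀ k, MeasurableSet (T k))
    (hmemT : ∀ k, pt k ∈ T k) (hnotT : ∀ i k, i < k → pt k ∉ T i)
    (n : ℕ) (hn : 1 ≤ n) :
    ∃ ρ : ProbabilityMeasure (X × Bool),
      ENNReal.ofReal (1/16) ≤ trainM (ρ : Measure (X × Bool)) n
        {zs | risk (ρ : Measure (X × Bool)) (A.toFun n zs) -
            ⨅ f : H, risk (ρ : Measure (X × Bool)) ↑f > (1/16 : ℝ)} := by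
  classical
  have hHne : H.Nonempty := ⟨A.toFun 0 Fin.elim0, A.mem_hyp 0 _⟩
  haveI : Nonempty ↥H := hHne.to_subtype
  set m := 2 * n with hmdef
  have hm : 0 < m := by omega
  set blk : X → Fin m := nflBlk T m hm with hblkdef
  have hblkmeas : Measurable blk := measurable_nflBlk hm hT
  have hblkpt : ∀ j : Fin m, blk (pt (j : ℕ)) = j := fun j => nflBlk_pt hm pt hmemT hnotT j
  set G : (Fin m → Bool) → X → Bool := fun g x => g (blk x) with hGdef
  have hGmeas : ∀ g, Measurable (G g) := fun g =>
    (Measurable.of_discrete (f := g)).comp hblkmeas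
  set e : (Fin m → Bool) → X → X × Bool := fun g x => (x, G g x) with hedef
  have hemeas : ∀ g, Measurable (e g) := fun g => measurable_id.prodMk (hGmeas g)
  set ν : Measure X := ((m : ℝ≥0∞))⁻¹ • ∑ j : Fin m, Measure.dirac (pt (j : ℕ)) with hνdef
  haveI hν : IsProbabilityMeasure ν := by
    constructor
    rw [hνdef, Measure.smul_apply, Measure.finset_sum_apply]
    simp only [measure_univ, Finset.sum_const, Finset.card_univ, Fintype.card_fin,
      nsmul_eq_mul, mul_one, smul_eq_mul]
    rw [ENNReal.inv_mul_cancel (by exact_mod_cast hm.ne') (by simp)]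
  set ρm : (Fin m → Bool) → Measure (X × Bool) := fun g => ν.map (e g) with hρdef
  have hρprob : ∀ g, IsProbabilityMeasure (ρm g) := fun g =>
    Measure.isProbabilityMeasure_map (hemeas g).aemeasurable
  -- risk formula
  have hrisk : ∀ (g : Fin m → Bool) (f : X → Bool), Measurable f →
      risk (ρm g) f = (m : ℝ)⁻¹ * ∑ j : Fin m, mloss (f (pt (j : ℕ))) (g j) := by
    intro g f hf
    have hint : ∀ j : Fin m,
        Integrable (fun x => lossOn f (e g x)) (Measure.dirac (pt (j : ℕ))) := by
      intro j
      refine Integrable.mono' (integrable_const 1)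
        ((measurable_lossOn hf).comp (hemeas g)).aestronglyMeasurable ?_
      exact Filter.Eventually.of_forall fun x => by
        rw [Real.norm_eq_abs, abs_of_nonneg (lossOn_nonneg _ _)]
        exact lossOn_le_one _ _
    have hmap : risk (ρm g) f = ∫ x, lossOn f (e g x) ∂ν := by
      rw [risk, hρdef]
      exact integral_map (hemeas g).aemeasurable (measurable_lossOn hf).aestronglyMeasurable
    rw [hmap, hνdef, integral_smul_measure, integral_finset_sum_measure (fun j _ => hint j)]
    have hdir : ∀ j : Fin m,
        ∫ x, lossOn f (e g x) ∂(Measure.dirac (pt (j : ℕ))) = mloss (f (pt (j : ℕ))) (g j) := by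
      intro j
      have hsm : StronglyMeasurable fun x => lossOn f (e g x) :=
        ((measurable_lossOn hf).comp (hemeas g)).stronglyMeasurable
      rw [integral_dirac' _ (pt (j : ℕ)) hsm]
      show lossOn f (pt (j : ℕ), G g (pt (j : ℕ))) = _
      rw [lossOn]
      show mloss (f (pt (j : ℕ))) (g (blk (pt (j : ℕ)))) = _
      rw [hblkpt j]
    rw [Finset.sum_congr rfl (fun j _ => hdir j)]
    simp [smul_eq_mul]
  -- infimum of risk over H is 0
  have hinf : ∀ g, (⨅ f : H, risk (ρm g) ↑f) = 0 := by
    intro g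
    have hnn : ∀ f : X → Bool, 0 ≤ risk (ρm g) f := fun f => risk_nonneg _ _
    have hG0 : risk (ρm g) (G g) = 0 := by
      rw [hrisk g (G g) (hGmeas g)]
      have hz : ∀ j : Fin m, mloss (G g (pt (j : ℕ))) (g j) = 0 := by
        intro j
        show mloss (g (blk (pt (j : ℕ)))) (g j) = 0
        rw [hblkpt j]
        exact mloss_self _
      rw [Finset.sum_congr rfl (fun j _ => hz j)]
      simp
    have hbdd : BddBelow (Set.range fun f : {g' : X → Bool // Measurable g'} =>
        risk (ρm g) f.1) := ⟨0, by rintro r ⟨f, rfl⟩; exact hnn _⟩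
    have hle : (⨅ f : {g' : X → Bool // Measurable g'}, risk (ρm g) f.1) ≤ 0 := by
      have h := ciInf_le hbdd (⟨G g, hGmeas g⟩ : {g' : X → Bool // Measurable g'})
      rw [hG0] at h
      exact h
    have hge : (0 : ℝ) ≤ ⨅ f : H, risk (ρm g) ↑f := le_ciInf fun f => hnn _
    have heq : (⨅ f : {g' : X → Bool // Measurable g'}, risk (ρm g) f.1) =
        ⨅ f : H, risk (ρm g) ↑f := huniv ⟨ρm g, hρprob g⟩
    exact le_antisymm (heq ▸ hle) hge
  by_contra hcon
  push_neg at hcon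
  set F : (Fin n → X × Bool) → X → Bool := A.toFun n with hFdef
  have hFH : ∀ zs, F zs ∈ H := A.mem_hyp n
  set Bad : (Fin m → Bool) → Set (Fin n → X × Bool) := fun g =>
    {zs | risk (ρm g) (F zs) - ⨅ f : H, risk (ρm g) ↑f > (1/16 : ℝ)} with hBaddef
  have hBadlt : ∀ g, trainM (ρm g) n (Bad g) < ENNReal.ofReal (1/16) := fun g =>
    hcon ⟨ρm g, hρprob g⟩
  set Tm : (Fin m → Bool) → Set (Fin n → X × Bool) := fun g =>
    toMeasurable (trainM (ρm g) n) (Bad g) with hTmdef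
  set κ : Measure (Fin n → X) := Measure.pi fun _ => ν with hκdef
  haveI hκprob : IsProbabilityMeasure κ := by rw [hκdef]; infer_instance
  set L : (Fin m → Bool) → (Fin n → X) → (Fin n → X × Bool) :=
    fun g xs i => e g (xs i) with hLdef
  have hLmp : ∀ g, MeasurePreserving (L g) κ (trainM (ρm g) n) := by
    intro g
    haveI := hρprob g
    exact measurePreserving_pi _ _ (fun _ => ⟨hemeas g, rfl⟩)
  set D : (Fin m → Bool) → Set (Fin n → X) := fun g => L g ⁻¹' (Tm g) with hDdef
  have hDmeas : ∀ g, MeasurableSet (D g) :=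
    fun g => (hLmp g).measurable (measurableSet_toMeasurable _ _)
  have hDlt : ∀ g, (κ (D g)).toReal ≤ 1/16 := by
    intro g
    have h1 : κ (D g) = trainM (ρm g) n (Tm g) :=
      (hLmp g).measure_preimage (measurableSet_toMeasurable _ _).nullMeasurableSet
    have h2 : trainM (ρm g) n (Tm g) = trainM (ρm g) n (Bad g) := measure_toMeasurable _
    rw [h1, h2]
    exact ENNReal.toReal_le_of_le_ofReal (by norm_num) (le_of_lt (hBadlt g))
  have hrisk_le_one : ∀ g (zs : Fin n → X × Bool), risk (ρm g) (F zs) ≤ 1 := by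
    intro g zs
    rw [hrisk g _ (hH _ (hFH zs))]
    have hs : ∑ j : Fin m, mloss (F zs (pt (j : ℕ))) (g j) ≤ (m : ℝ) := by
      calc ∑ j : Fin m, mloss (F zs (pt (j : ℕ))) (g j) ≤ ∑ _j : Fin m, (1 : ℝ) :=
            Finset.sum_le_sum fun j _ => mloss_le_one _ _
        _ = m := by simp
    have hmpos : (0 : ℝ) < m := by exact_mod_cast hm
    calc (m : ℝ)⁻¹ * ∑ j : Fin m, mloss (F zs (pt (j : ℕ))) (g j)
        ≤ (m : ℝ)⁻¹ * m := by
          apply mul_le_mul_of_nonneg_left hs (by positivity)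
      _ = 1 := by field_simp
  have claim2 : ∀ (g : Fin m → Bool) (xs : Fin n → X),
      risk (ρm g) (F (L g xs)) ≤ 1/16 + Set.indicator (D g) (fun _ => (1 : ℝ)) xs := by
    intro g xs
    by_cases hxs : xs ∈ D g
    · rw [Set.indicator_of_mem hxs]
      linarith [hrisk_le_one g (L g xs)]
    · rw [Set.indicator_of_notMem hxs]
      have h1 : L g xs ∉ Bad g := fun h => hxs (subset_toMeasurable _ _ h)
      have h2 : risk (ρm g) (F (L g xs)) - ⨅ f : H, risk (ρm g) ↑f ≤ 1/16 := by
        by_contra h3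
        push_neg at h3
        exact h1 h3
      rw [hinf g, sub_zero] at h2
      linarith
  -- the averaging lower bound
  have claim1 : ∀ xs : Fin n → X,
      (1/4 : ℝ) * 2^m ≤ ∑ g : Fin m → Bool, risk (ρm g) (F (L g xs)) := by
    intro xs
    set U : Finset (Fin m) := Finset.univ.filter (fun j => ∀ i, blk (xs i) ≠ j) with hUdef
    have hcardU : n ≤ U.card := by
      have h1 : (Finset.univ.filter (fun j => ¬ ∀ i, blk (xs i) ≠ j)).card ≤ n := by
        have hsub : (Finset.univ.filter (fun j => ¬ ∀ i, blk (xs i) ≠ j)) ⊆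
            Finset.image (fun i => blk (xs i)) Finset.univ := by
          intro j hj
          simp only [Finset.mem_filter, Finset.mem_univ, true_and] at hj
          push_neg at hj
          obtain ⟨i, hi⟩ := hj
          exact Finset.mem_image.mpr ⟨i, Finset.mem_univ i, hi⟩
        calc (Finset.univ.filter (fun j => ¬ ∀ i, blk (xs i) ≠ j)).card
            ≤ (Finset.image (fun i => blk (xs i)) Finset.univ).card :=
              Finset.card_le_card hsub
          _ ≤ (Finset.univ : Finset (Fin n)).card := Finset.card_image_le
          _ = n := by simp
      have h2 := Finset.card_filter_add_card_filter_not
        (s := (Finset.univ : Finset (Fin m))) (p := fun j => ∀ i, blk (xs i) ≠ j)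
      rw [Finset.card_univ, Fintype.card_fin] at h2
      rw [← hUdef] at h2
      omega
    have hblock : ∀ j ∈ U, (2:ℝ)^(m-1) ≤
        ∑ g : Fin m → Bool, mloss (F (L g xs) (pt (j : ℕ))) (g j) := by
      intro j hjU
      have hjne : ∀ i, blk (xs i) ≠ j := by
        have h := Finset.mem_filter.mp (hUdef ▸ hjU)
        exact h.2
      set σ : (Fin m → Bool) → (Fin m → Bool) := fun g => Function.update g j (!(g j))
        with hσdef
      have hσinv : Function.Involutive σ := by
        intro g
        funext k
        by_cases hk : k = j
        · subst hk
          simp [hσdef, Function.update_self]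
        · simp [hσdef, Function.update_of_ne hk]
      have hLflip : ∀ g, L (σ g) xs = L g xs := by
        intro g
        funext i
        show e (σ g) (xs i) = e g (xs i)
        show (xs i, (σ g) (blk (xs i))) = (xs i, g (blk (xs i)))
        congr 1
        exact Function.update_of_ne (hjne i) _ g
      set h : (Fin m → Bool) → ℝ := fun g => mloss (F (L g xs) (pt (j : ℕ))) (g j)
        with hhdef
      have hpair : ∀ g, h g + h (σ g) = 1 := by
        intro g
        have h1 : h (σ g) = mloss (F (L g xs) (pt (j : ℕ))) (!(g j)) := by
          show mloss (F (L (σ g) xs) (pt (j : ℕ))) ((σ g) j) = _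
          rw [hLflip g]
          congr 1
          simp [hσdef, Function.update_self]
        rw [h1]
        show mloss (F (L g xs) (pt (j : ℕ))) (g j) + _ = 1
        exact mloss_add_not _ _
      have hsumflip : ∑ g : Fin m → Bool, h (σ g) = ∑ g : Fin m → Bool, h g :=
        Fintype.sum_bijective σ hσinv.bijective _ _ (fun g => rfl)
      have hcardfun : ((Finset.univ : Finset (Fin m → Bool)).card : ℝ) = 2^m := by
        rw [Finset.card_univ, Fintype.card_fun]
        simp
      have hsum1 : (∑ g : Fin m → Bool, h g) + (∑ g : Fin m → Bool, h g) = (2:ℝ)^m := by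
        calc (∑ g : Fin m → Bool, h g) + (∑ g : Fin m → Bool, h g)
            = (∑ g : Fin m → Bool, h g) + (∑ g : Fin m → Bool, h (σ g)) := by
              rw [hsumflip]
          _ = ∑ g : Fin m → Bool, (h g + h (σ g)) := (Finset.sum_add_distrib).symm
          _ = ∑ _g : Fin m → Bool, (1:ℝ) := Finset.sum_congr rfl fun g _ => hpair g
          _ = 2^m := by rw [Finset.sum_const, nsmul_eq_mul, mul_one, hcardfun]
      have hexp : (2:ℝ)^m = 2^(m-1) * 2 := by
        rw [← pow_succ]
        congr 1
        omega
      show (2:ℝ)^(m-1) ≤ ∑ g : Fin m → Bool, h g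
      linarith
    have hstep1 : ∀ g : Fin m → Bool,
        (m : ℝ)⁻¹ * ∑ j ∈ U, mloss (F (L g xs) (pt (j : ℕ))) (g j) ≤
          risk (ρm g) (F (L g xs)) := by
      intro g
      rw [hrisk g _ (hH _ (hFH _))]
      apply mul_le_mul_of_nonneg_left _ (by positivity)
      exact Finset.sum_le_sum_of_subset_of_nonneg (Finset.subset_univ U)
        (fun j _ _ => mloss_nonneg _ _)
    have hm2 : (m : ℝ) = 2 * n := by rw [hmdef]; push_cast; ring
    have hn0 : (n : ℝ) ≠ 0 := Nat.cast_ne_zero.mpr (by omega)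
    have hUc : (n : ℝ) ≤ U.card := by exact_mod_cast hcardU
    have hexp : (2:ℝ)^m = 2^(m-1) * 2 := by
      rw [← pow_succ]
      congr 1
      omega
    calc (1/4 : ℝ) * 2^m = (2*(n:ℝ))⁻¹ * ((n:ℝ) * 2^(m-1)) := by
          rw [hexp]; field_simp; ring
      _ ≤ (2*(n:ℝ))⁻¹ * ((U.card : ℝ) * 2^(m-1)) := by
          apply mul_le_mul_of_nonneg_left
            (mul_le_mul_of_nonneg_right hUc (by positivity)) (by positivity)
      _ = (m:ℝ)⁻¹ * ∑ _j ∈ U, (2:ℝ)^(m-1) := by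
          rw [hm2, Finset.sum_const, nsmul_eq_mul]
      _ ≤ (m:ℝ)⁻¹ * ∑ j ∈ U, ∑ g : Fin m → Bool,
            mloss (F (L g xs) (pt (j : ℕ))) (g j) := by
          apply mul_le_mul_of_nonneg_left (Finset.sum_le_sum hblock) (by positivity)
      _ = ∑ g : Fin m → Bool, (m:ℝ)⁻¹ * ∑ j ∈ U,
            mloss (F (L g xs) (pt (j : ℕ))) (g j) := by
          rw [Finset.sum_comm, Finset.mul_sum]
      _ ≤ ∑ g : Fin m → Bool, risk (ρm g) (F (L g xs)) :=
          Finset.sum_le_sum fun g _ => hstep1 g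

  have hpt : ∀ xs : Fin n → X,
      (3/16 : ℝ) * 2^m ≤ ∑ g : Fin m → Bool, Set.indicator (D g) (fun _ => (1 : ℝ)) xs := by
    intro xs
    have h1 := claim1 xs
    have h2 : ∑ g : Fin m → Bool, risk (ρm g) (F (L g xs)) ≤
        ∑ g : Fin m → Bool, (1/16 + Set.indicator (D g) (fun _ => (1 : ℝ)) xs) :=
      Finset.sum_le_sum fun g _ => claim2 g xs
    rw [Finset.sum_add_distrib, Finset.sum_const, Finset.card_univ] at h2
    have hcard2 : (Fintype.card (Fin m → Bool) : ℝ) = 2^m := by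
      rw [Fintype.card_fun]
      simp
    rw [nsmul_eq_mul] at h2
    rw [hcard2] at h2
    linarith
  have hind : ∀ g : Fin m → Bool, Integrable (Set.indicator (D g) (fun _ => (1 : ℝ))) κ :=
    fun g => (integrable_const (1 : ℝ)).indicator (hDmeas g)
  have hintle := integral_mono (μ := κ) (integrable_const ((3/16 : ℝ) * 2^m))
    (integrable_finset_sum _ (fun g _ => hind g)) hpt
  rw [integral_const, integral_finset_sum _ (fun g _ => hind g)] at hintle
  simp only [probReal_univ, ENNReal.toReal_one, one_smul] at hintle
  have hie : ∀ g : Fin m → Bool,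
      ∫ xs, Set.indicator (D g) (fun _ => (1 : ℝ)) xs ∂κ = (κ (D g)).toReal := by
    intro g
    rw [integral_indicator_const (1 : ℝ) (hDmeas g)]
    simp [measureReal_def]
  rw [Finset.sum_congr rfl (fun g _ => hie g)] at hintle
  have hub : ∑ g : Fin m → Bool, (κ (D g)).toReal ≤ (2^m : ℝ) * (1/16) := by
    calc ∑ g : Fin m → Bool, (κ (D g)).toReal ≤ ∑ _g : Fin m → Bool, (1/16 : ℝ) :=
          Finset.sum_le_sum fun g _ => hDlt g
      _ = (2^m : ℝ) * (1/16) := by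
          rw [Finset.sum_const, Finset.card_univ, nsmul_eq_mul]
          congr 1
          rw [Fintype.card_fun]
          simp
  have hppos : (0 : ℝ) < 2^m := by positivity
  linarith

/-- **no free lunch.** Suppose `X` carries an atom-free probability
measure. If a hypotheses space `H` of measurable binary classifiers is universal,
then `H` is not uniformly learnable. -/
theorem no_free_lunch
    (μ : Measure X) (hμ : IsProbabilityMeasure μ) (hatomfree : ∀ x : X, μ {x} = 0)
    (H : Set (X → Bool)) (hH : ∀ f ∈ H, Measurable f) (huniv : Universal H) :
    ¬ UnifLearnable H := by
  rintro ⟨A, hA⟩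
  haveI := hμ
  obtain ⟨pt, T, hT, hmemT, hnotT⟩ := exists_sep_points μ hatomfree
  have h16 := hA (1/16) (by norm_num)
  have hev := (h16.eventually_lt_const
    (show (0 : ℝ≥0∞) < ENNReal.ofReal (1/16) from ENNReal.ofReal_pos.mpr (by norm_num))).and
    (eventually_ge_atTop 1)
  obtain ⟨n, hlt, hn1⟩ := hev.exists
  obtain ⟨ρ, hρ⟩ := nfl_key hH huniv A pt T hT hmemT hnotT n hn1
  have hle := le_iSup (fun ρ : ProbabilityMeasure (X × Bool) =>
    trainM (ρ : Measure (X × Bool)) n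
      {zs | risk (ρ : Measure (X × Bool)) (A.toFun n zs) -
          ⨅ f : H, risk (ρ : Measure (X × Bool)) ↑f > (1/16 : ℝ)}) ρ
  exact absurd (hρ.trans hle) (not_le.mpr hlt)
end

section
/- Let Y = {0,1}, let X be a measurable space carrying an atom-free probability measure, let ℓ be the misclassification loss, and let F denote the set of all measurable functions from X to Y. For every learning algorithm A on F and every fixed sample size n, there exists a probability measure ρ on X × Y such that the expected value over training sets z_n ~ ρ^n of R_ρ(A_{z_n}) − inf_{f∈F} R_ρ(f) is greater than 1/4. -/
/- Supervised binary classification setting: `X` a measurable space, labels in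
`Bool` (i.e. Y = {0,1}), samples in `Z = X × Bool`, misclassification loss. -/

open MeasureTheory Filter
open scoped ENNReal

variable {X : Type*} [MeasurableSpace X]

/-- From an atom-free measure, any set of positive measure contains a nonempty
measurable piece whose removal keeps positive measure. -/
lemma nfl_split (μ : Measure X) (hatom : ∀ x : X, μ {x} = 0)
    {s : Set X} (hpos : 0 < μ s) :
    ∃ t : Set X, MeasurableSet t ∧ (s ∩ t).Nonempty ∧ 0 < μ (s \ t) := by
  have hsne : s.Nonempty := by
    rcases Set.eq_empty_or_nonempty s with h | h
    · simp [h] at hpos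
    · exact h
  obtain ⟨x, hx⟩ := hsne
  have hlt : μ {x} < μ s := lt_of_le_of_lt (le_of_eq (hatom x)) hpos
  rw [measure_eq_iInf] at hlt
  simp only [iInf_lt_iff] at hlt
  obtain ⟨u, hxu, hu, hult⟩ := hlt
  refine ⟨u, hu, ⟨x, hx, hxu (Set.mem_singleton x)⟩, ?_⟩
  rcases eq_or_lt_of_le (zero_le : 0 ≤ μ (s \ u)) with h0 | h0
  · exfalso
    have h1 : μ s ≤ μ (s ∩ u) + μ (s \ u) := by
      conv_lhs => rw [← Set.inter_union_diff s u]
      exact measure_union_le _ _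
    rw [← h0, add_zero] at h1
    exact absurd (h1.trans (measure_mono Set.inter_subset_right)) (not_le.mpr hult)
  · exact h0

/-- From an atom-free measure one can extract arbitrarily many pairwise disjoint
nonempty measurable sets. -/
lemma nfl_family (μ : Measure X) (hatom : ∀ x : X, μ {x} = 0) :
    ∀ (k : ℕ) (s : Set X), MeasurableSet s → 0 < μ s →
      ∃ B : Fin k → Set X, (∀ j, MeasurableSet (B j)) ∧ (∀ j, (B j).Nonempty) ∧
        (∀ j, B j ⊆ s) ∧ ∀ i j, i ≠ j → Disjoint (B i) (B j) := by
  intro k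
  induction k with
  | zero =>
      intro s _ _
      exact ⟨fun j => j.elim0, fun j => j.elim0, fun j => j.elim0, fun j => j.elim0,
        fun i => i.elim0⟩
  | succ m ih =>
      intro s hs hpos
      obtain ⟨t, ht, hne, hpos'⟩ := nfl_split μ hatom hpos
      obtain ⟨B', hB'meas, hB'ne, hB'sub, hB'disj⟩ := ih (s \ t) (hs.diff ht) hpos'
      refine ⟨Fin.cons (s ∩ t) B', ?_, ?_, ?_, ?_⟩
      · intro j
        refine Fin.cases ?_ ?_ j
        · simpa using hs.inter ht
        · intro i; simpa using hB'meas i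
      · intro j
        refine Fin.cases ?_ ?_ j
        · simpa using hne
        · intro i; simpa using hB'ne i
      · intro j
        refine Fin.cases ?_ ?_ j
        · simpa using Set.inter_subset_left
        · intro i; simpa using (hB'sub i).trans Set.diff_subset
      · have hdisj0 : ∀ i : Fin m, Disjoint (s ∩ t) (B' i) := by
          intro i
          refine Set.disjoint_left.mpr ?_
          intro x hx hx'
          exact (hB'sub i hx').2 hx.2
        intro i j
        induction i using Fin.cases with
        | zero =>
            induction j using Fin.cases with
            | zero => intro h; exact absurd rfl h
            | succ j' => intro _; simpa using hdisj0 j'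
        | succ i' =>
            induction j using Fin.cases with
            | zero => intro _; simpa using (hdisj0 i').symm
            | succ j' =>
                intro hij
                have hne : i' ≠ j' := fun h => hij (by simp [h])
                simpa using hB'disj i' j' hne

/-- Let `F` be the set of all measurable functions `X → Bool` and
suppose `X` carries an atom-free probability measure. For every learning algorithm
`A` on `F` and every sample size `n` there is a distribution `ρ` such that the
expected excess risk of `A` over training sets of size `n` exceeds `1/4`. -/
theorem no_free_lunch_quantitative
    (μ : Measure X) (hμ : IsProbabilityMeasure μ) (hatomfree : ∀ x : X, μ {x} = 0)
    (A : LearningAlg {f : X → Bool | Measurable f}) (n : ℕ) :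
    ∃ ρ : ProbabilityMeasure (X × Bool),
      (1 / 4 : ℝ≥0∞) <
        ∫⁻ zs, ENNReal.ofReal
            (risk (ρ : Measure (X × Bool)) (A.toFun n zs) -
              ⨅ f : {f : X → Bool | Measurable f},
                risk (ρ : Measure (X × Bool)) ↑f)
          ∂ (trainM (ρ : Measure (X × Bool)) n) := by
  classical
  set k : ℕ := 2 * n + 2 with hk
  clear_value k
  have hk0 : (k : ℝ≥0∞) ≠ 0 := by simp [hk]
  have hktop : (k : ℝ≥0∞) ≠ ∞ := by simp
  have hkpos : (0:ℝ) < (k : ℝ) := by rw [hk]; positivity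
  obtain ⟨B, hBmeas, hBne, -, hBdisj⟩ :=
    nfl_family μ hatomfree k Set.univ MeasurableSet.univ
      (by rw [hμ.measure_univ]; exact zero_lt_one)
  choose b hb using hBne
  set pt : (Fin k → Bool) → Fin k → X × Bool := fun σ j => (b j, σ j) with hpt
  set ρm : (Fin k → Bool) → Measure (X × Bool) := fun σ =>
    ((k : ℝ≥0∞))⁻¹ • ∑ j : Fin k, Measure.dirac (pt σ j) with hρm
  have hρapp : ∀ (σ : Fin k → Bool) (s : Set (X × Bool)), MeasurableSet s →
      ρm σ s = (k : ℝ≥0∞)⁻¹ * ∑ j : Fin k, s.indicator 1 (pt σ j) := by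
    intro σ s hs
    rw [hρm]
    simp only [Measure.smul_apply, Measure.finset_sum_apply, smul_eq_mul]
    congr 1
    exact Finset.sum_congr rfl fun j _ => Measure.dirac_apply' _ hs
  have hprob : ∀ σ, IsProbabilityMeasure (ρm σ) := by
    intro σ
    constructor
    rw [hρapp σ Set.univ MeasurableSet.univ]
    simp [ENNReal.inv_mul_cancel hk0 hktop]
  have hloss_meas : ∀ g : X → Bool, Measurable g → Measurable (lossOn g) := by
    intro g hg
    have h1 : Measurable (fun z : X × Bool => (g z.1, z.2)) :=
      (hg.comp measurable_fst).prodMk measurable_snd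
    exact (measurable_of_countable (fun p : Bool × Bool => mloss p.1 p.2)).comp h1
  have hrisk : ∀ (σ : Fin k → Bool) (g : X → Bool), Measurable g →
      risk (ρm σ) g = (k : ℝ)⁻¹ * ∑ j : Fin k, mloss (g (b j)) (σ j) := by
    intro σ g hg
    have hm := hloss_meas g hg
    have hint : ∀ j : Fin k, Integrable (lossOn g) (Measure.dirac (pt σ j)) := by
      intro j
      refine ⟨hm.aestronglyMeasurable, ?_⟩
      rw [HasFiniteIntegral]
      rw [lintegral_dirac' _ hm.enorm]
      exact enorm_lt_top
    rw [risk, hρm]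
    simp only [integral_smul_measure]
    rw [integral_finset_sum_measure fun j _ => hint j]
    rw [ENNReal.toReal_inv, ENNReal.toReal_natCast, smul_eq_mul]
    congr 1
    exact Finset.sum_congr rfl fun j _ => integral_dirac' _ _ hm.stronglyMeasurable
  have hmloss_nonneg : ∀ t y : Bool, 0 ≤ mloss t y := by
    intro t y; rw [mloss]; split <;> norm_num
  have hrisk_nonneg : ∀ (ρ : Measure (X × Bool)) (g : X → Bool), 0 ≤ risk ρ g :=
    fun ρ g => integral_nonneg fun z => hmloss_nonneg _ _
  have hsep : ∀ σ : Fin k → Bool, ∃ g : X → Bool, Measurable g ∧ ∀ j, g (b j) = σ j := by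
    intro σ
    set U : Set X := ⋃ (j : Fin k) (_ : σ j = true), B j with hU
    have hUmeas : MeasurableSet U :=
      MeasurableSet.iUnion fun j => MeasurableSet.iUnion fun _ => hBmeas j
    refine ⟨fun x => if x ∈ U then true else false, ?_, ?_⟩
    · refine measurable_to_countable' fun y => ?_
      rcases y with _ | _
      · have : (fun x => if x ∈ U then true else false) ⁻¹' {false} = Uᶜ := by
          ext x; by_cases hx : x ∈ U <;> simp [hx]
        rw [this]; exact hUmeas.compl
      · have : (fun x => if x ∈ U then true else false) ⁻¹' {true} = U := by
          ext x; by_cases hx : x ∈ U <;> simp [hx]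
        rw [this]; exact hUmeas
    · intro j
      by_cases hσ : σ j = true
      · have : b j ∈ U := Set.mem_iUnion.mpr ⟨j, Set.mem_iUnion.mpr ⟨hσ, hb j⟩⟩
        simp [this, hσ]
      · have : b j ∉ U := by
          intro hmem
          obtain ⟨i, hi⟩ := Set.mem_iUnion.mp hmem
          obtain ⟨hσi, hbi⟩ := Set.mem_iUnion.mp hi
          have hij : i ≠ j := fun h => hσ (h ▸ hσi)
          exact Set.disjoint_left.mp (hBdisj i j hij) hbi (hb j)
        simp only [Bool.not_eq_true] at hσ
        simp [this, hσ]
  have hinf : ∀ σ, (⨅ f : {f : X → Bool | Measurable f}, risk (ρm σ) ↑f) = 0 := by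
    intro σ
    obtain ⟨g, hg, hgb⟩ := hsep σ
    have hg0 : risk (ρm σ) g = 0 := by
      rw [hrisk σ g hg]
      have : ∀ j : Fin k, mloss (g (b j)) (σ j) = 0 := by
        intro j; rw [hgb j, mloss]; simp
      simp [this]
    have hbdd : BddBelow (Set.range fun f : {f : X → Bool | Measurable f} =>
        risk (ρm σ) ↑f) := by
      refine ⟨0, ?_⟩
      rintro x ⟨f, rfl⟩
      exact hrisk_nonneg _ _
    haveI : Nonempty {f : X → Bool | Measurable f} := ⟨⟨fun _ => true, measurable_const⟩⟩
    refine le_antisymm ?_ (le_ciInf fun f => hrisk_nonneg _ _)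
    calc (⨅ f : {f : X → Bool | Measurable f}, risk (ρm σ) ↑f)
        ≤ risk (ρm σ) ↑(⟨g, hg⟩ : {f : X → Bool | Measurable f}) := ciInf_le hbdd _
      _ = 0 := hg0
  set tup : (Fin k → Bool) → (Fin n → Fin k) → (Fin n → X × Bool) :=
    fun σ w i => pt σ (w i) with htup
  have htrain : ∀ σ, trainM (ρm σ) n
      = ((k : ℝ≥0∞) ^ n)⁻¹ • ∑ w : Fin n → Fin k, Measure.dirac (tup σ w) := by
    intro σ
    haveI := hprob σ
    refine Measure.pi_eq ?_
    intro s hs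
    have hmeas : MeasurableSet (Set.pi Set.univ s) := MeasurableSet.univ_pi hs
    rw [Measure.smul_apply, Measure.finset_sum_apply, smul_eq_mul]
    have hdir : ∀ w : Fin n → Fin k, Measure.dirac (tup σ w) (Set.pi Set.univ s)
        = ∏ i : Fin n, (if pt σ (w i) ∈ s i then (1:ℝ≥0∞) else 0) := by
      intro w
      rw [Measure.dirac_apply' _ hmeas, Set.indicator_apply, Fintype.prod_boole]
      have h2 : tup σ w ∈ Set.pi Set.univ s ↔ ∀ i : Fin n, pt σ (w i) ∈ s i := by
        rw [Set.mem_univ_pi]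
      by_cases hc : ∀ i : Fin n, pt σ (w i) ∈ s i
      · simp only [h2, Pi.one_apply, if_pos hc]
      · simp only [h2, Pi.one_apply, if_neg hc]
    calc ((k : ℝ≥0∞) ^ n)⁻¹ * ∑ w : Fin n → Fin k, Measure.dirac (tup σ w) (Set.pi Set.univ s)
        = ((k : ℝ≥0∞) ^ n)⁻¹ *
          ∑ w : Fin n → Fin k, ∏ i : Fin n, (if pt σ (w i) ∈ s i then (1:ℝ≥0∞) else 0) := by
          rw [Finset.sum_congr rfl fun w _ => hdir w]
      _ = ((k : ℝ≥0∞) ^ n)⁻¹ *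
          ∏ i : Fin n, ∑ j : Fin k, (if pt σ j ∈ s i then (1:ℝ≥0∞) else 0) := by
          rw [Fintype.prod_sum (fun i j => if pt σ j ∈ s i then (1:ℝ≥0∞) else 0)]
      _ = ∏ i : Fin n, (k : ℝ≥0∞)⁻¹ *
            ∑ j : Fin k, (if pt σ j ∈ s i then (1:ℝ≥0∞) else 0) := by
          rw [Finset.prod_mul_distrib, Finset.prod_const, ENNReal.inv_pow,
            Finset.card_univ, Fintype.card_fin]
      _ = ∏ i : Fin n, ρm σ (s i) := by
          refine Finset.prod_congr rfl fun i _ => ?_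
          rw [hρapp σ (s i) (hs i)]
          have hind : ∀ j : Fin k, (if pt σ j ∈ s i then (1:ℝ≥0∞) else 0)
              = (s i).indicator 1 (pt σ j) := by
            intro j; simp [Set.indicator_apply]
          rw [Finset.sum_congr rfl fun j _ => hind j]
  set N : (Fin k → Bool) → (Fin n → Fin k) → ℕ := fun σ w =>
    ∑ j : Fin k, (if A.toFun n (tup σ w) (b j) = σ j then 0 else 1) with hN
  have hI : ∀ σ : Fin k → Bool,
      (∫⁻ zs, ENNReal.ofReal
          (risk (ρm σ) (A.toFun n zs) -
            ⨅ f : {f : X → Bool | Measurable f}, risk (ρm σ) ↑f)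
        ∂ (trainM (ρm σ) n))
      = (∑ w : Fin n → Fin k, (N σ w : ℝ≥0∞)) / (k : ℝ≥0∞) ^ (n + 1) := by
    intro σ
    set F : (Fin n → X × Bool) → ℝ≥0∞ := fun zs =>
      ENNReal.ofReal ((k : ℝ)⁻¹ * ∑ j : Fin k, mloss (A.toFun n zs (b j)) (σ j)) with hF
    have hFmeas : Measurable F := by
      refine ENNReal.measurable_ofReal.comp (Measurable.const_mul ?_ _)
      refine Finset.measurable_sum _ fun j _ => ?_
      exact (measurable_of_countable (fun t : Bool => mloss t (σ j))).comp
        ((measurable_pi_apply (b j)).comp (A.measurable n))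
    have hpt_eq : ∀ zs, ENNReal.ofReal
        (risk (ρm σ) (A.toFun n zs) -
          ⨅ f : {f : X → Bool | Measurable f}, risk (ρm σ) ↑f) = F zs := by
      intro zs
      rw [hinf σ, sub_zero, hrisk σ _ (A.mem_hyp n zs)]
    calc (∫⁻ zs, ENNReal.ofReal
          (risk (ρm σ) (A.toFun n zs) -
            ⨅ f : {f : X → Bool | Measurable f}, risk (ρm σ) ↑f)
        ∂ (trainM (ρm σ) n))
        = ∫⁻ zs, F zs ∂ (trainM (ρm σ) n) := lintegral_congr hpt_eq
      _ = ((k : ℝ≥0∞) ^ n)⁻¹ * ∑ w : Fin n → Fin k, F (tup σ w) := by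
          rw [htrain σ, lintegral_smul_measure, lintegral_finset_sum_measure]
          simp only [lintegral_dirac' _ hFmeas, smul_eq_mul]
      _ = ((k : ℝ≥0∞) ^ n)⁻¹ * ∑ w : Fin n → Fin k, (k : ℝ≥0∞)⁻¹ * (N σ w : ℝ≥0∞) := by
          congr 1
          refine Finset.sum_congr rfl fun w _ => ?_
          show ENNReal.ofReal ((k : ℝ)⁻¹ *
            ∑ j : Fin k, mloss (A.toFun n (tup σ w) (b j)) (σ j)) = (k : ℝ≥0∞)⁻¹ * (N σ w : ℝ≥0∞)
          have hsum_nonneg : (0:ℝ) ≤ ∑ j : Fin k, mloss (A.toFun n (tup σ w) (b j)) (σ j) :=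
            Finset.sum_nonneg fun j _ => hmloss_nonneg _ _
          have hNr : (∑ j : Fin k, mloss (A.toFun n (tup σ w) (b j)) (σ j)) = (N σ w : ℝ) := by
            rw [hN]
            push_cast
            refine Finset.sum_congr rfl fun j _ => ?_
            simp [mloss]
          rw [hNr, ENNReal.ofReal_mul (by positivity), ENNReal.ofReal_inv_of_pos hkpos,
            ENNReal.ofReal_natCast, ENNReal.ofReal_natCast]
      _ = (∑ w : Fin n → Fin k, (N σ w : ℝ≥0∞)) / (k : ℝ≥0∞) ^ (n + 1) := by
          rw [← Finset.mul_sum, div_eq_mul_inv, pow_succ,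
            ENNReal.mul_inv (Or.inl (pow_ne_zero n hk0)) (Or.inl (ENNReal.pow_ne_top hktop))]
          ring
  have hpair : ∀ (w : Fin n → Fin k) (j : Fin k), (∀ i, w i ≠ j) →
      (∑ σ : Fin k → Bool,
        (if A.toFun n (tup σ w) (b j) = σ j then 0 else 1) : ℕ) = 2 ^ (2 * n + 1) := by
    intro w j hw
    set e : (Fin k → Bool) → (Fin k → Bool) := fun σ => Function.update σ j (!σ j) with he
    have hinv : Function.Involutive e := by
      intro σ
      funext x
      by_cases hx : x = j
      · subst hx; simp [he, Function.update_self]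
      · simp [he, Function.update_of_ne hx]
    have htupe : ∀ σ, tup (e σ) w = tup σ w := by
      intro σ; funext i
      simp [htup, hpt, he, Function.update_of_ne (hw i)]
    have hsum1 : ∀ σ : Fin k → Bool,
        ((if A.toFun n (tup σ w) (b j) = σ j then 0 else 1)
          + (if A.toFun n (tup (e σ) w) (b j) = (e σ) j then 0 else 1) : ℕ) = 1 := by
      intro σ
      rw [htupe σ]
      have hej : e σ j = !σ j := Function.update_self j (!σ j) σ
      rw [hej]
      cases hA : A.toFun n (tup σ w) (b j) <;> cases hσ : σ j <;> simp
    have hbij : ∑ σ : Fin k → Bool,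
        ((if A.toFun n (tup (e σ) w) (b j) = (e σ) j then 0 else 1) : ℕ)
        = ∑ σ : Fin k → Bool, ((if A.toFun n (tup σ w) (b j) = σ j then 0 else 1) : ℕ) :=
      Fintype.sum_bijective e hinv.bijective _ _ (fun σ => rfl)
    have h2 : 2 * (∑ σ : Fin k → Bool,
        ((if A.toFun n (tup σ w) (b j) = σ j then 0 else 1) : ℕ)) = 2 ^ k := by
      calc 2 * (∑ σ : Fin k → Bool,
          ((if A.toFun n (tup σ w) (b j) = σ j then 0 else 1) : ℕ))
          = (∑ σ : Fin k → Bool, ((if A.toFun n (tup σ w) (b j) = σ j then 0 else 1) : ℕ))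
            + ∑ σ : Fin k → Bool,
              ((if A.toFun n (tup (e σ) w) (b j) = (e σ) j then 0 else 1) : ℕ) := by
            rw [hbij, two_mul]
        _ = ∑ σ : Fin k → Bool,
            (((if A.toFun n (tup σ w) (b j) = σ j then 0 else 1) : ℕ)
              + ((if A.toFun n (tup (e σ) w) (b j) = (e σ) j then 0 else 1) : ℕ)) :=
            Finset.sum_add_distrib.symm
        _ = ∑ _σ : Fin k → Bool, 1 := Finset.sum_congr rfl fun σ _ => hsum1 σ
        _ = 2 ^ k := by
            rw [Finset.sum_const, smul_eq_mul, mul_one, Finset.card_univ, Fintype.card_fun,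
              Fintype.card_bool, Fintype.card_fin]
    have hpow : (2:ℕ) ^ k = 2 * 2 ^ (2 * n + 1) := by rw [hk]; ring
    exact Nat.eq_of_mul_eq_mul_left (by norm_num) (h2.trans hpow)
  have hcount : ∀ w : Fin n → Fin k,
      (n + 2) * 2 ^ (2 * n + 1) ≤ ∑ σ : Fin k → Bool, N σ w := by
    intro w
    have hswap : ∑ σ : Fin k → Bool, N σ w
        = ∑ j : Fin k, ∑ σ : Fin k → Bool,
            ((if A.toFun n (tup σ w) (b j) = σ j then 0 else 1) : ℕ) := by
      simp only [hN]
      exact Finset.sum_comm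
    set T : Finset (Fin k) := Finset.univ.filter (fun j => ∀ i, w i ≠ j) with hT
    have hTcard : n + 2 ≤ T.card := by
      have h1 : T = Finset.univ \ Finset.image w Finset.univ := by
        rw [hT]
        ext j
        simp [eq_comm, not_exists]
      have h2 : (Finset.image w Finset.univ).card ≤ n := by
        calc (Finset.image w Finset.univ).card ≤ (Finset.univ : Finset (Fin n)).card :=
              Finset.card_image_le
          _ = n := by simp
      have h3 : (Finset.univ : Finset (Fin k)).card = k := by simp
      rw [h1, Finset.card_sdiff_of_subset (Finset.subset_univ _), h3]
      have h4 : k - n ≤ k - (Finset.image w Finset.univ).card := Nat.sub_le_sub_left h2 k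
      have h5 : k - n = n + 2 := by
        rw [hk, two_mul, add_assoc, Nat.add_sub_cancel_left]
      exact h5 ▸ h4
    calc (n + 2) * 2 ^ (2 * n + 1) ≤ T.card * 2 ^ (2 * n + 1) :=
          Nat.mul_le_mul_right _ hTcard
      _ = ∑ _j ∈ T, 2 ^ (2 * n + 1) := by rw [Finset.sum_const, smul_eq_mul]
      _ = ∑ j ∈ T, ∑ σ : Fin k → Bool,
            ((if A.toFun n (tup σ w) (b j) = σ j then 0 else 1) : ℕ) := by
          refine Finset.sum_congr rfl fun j hj => ?_
          exact (hpair w j (by simpa [hT] using (Finset.mem_filter.mp hj).2)).symm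
      _ ≤ ∑ j : Fin k, ∑ σ : Fin k → Bool,
            ((if A.toFun n (tup σ w) (b j) = σ j then 0 else 1) : ℕ) :=
          Finset.sum_le_sum_of_subset (Finset.subset_univ T)
      _ = ∑ σ : Fin k → Bool, N σ w := hswap.symm
  -- final contradiction
  by_contra hcon
  push_neg at hcon
  have hS : ∀ σ : Fin k → Bool, 4 * (∑ w : Fin n → Fin k, N σ w) ≤ k ^ (n + 1) := by
    intro σ
    have h1 : (∫⁻ zs, ENNReal.ofReal
        (risk (ρm σ) (A.toFun n zs) -
          ⨅ f : {f : X → Bool | Measurable f}, risk (ρm σ) ↑f)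
      ∂ (trainM (ρm σ) n)) ≤ 1 / 4 := hcon ⟨ρm σ, hprob σ⟩
    rw [hI σ, ENNReal.div_le_iff (pow_ne_zero _ hk0) (ENNReal.pow_ne_top hktop)] at h1
    have h2 : (4:ℝ≥0∞) * (∑ w : Fin n → Fin k, (N σ w : ℝ≥0∞))
        ≤ 4 * (1 / 4 * (k:ℝ≥0∞) ^ (n + 1)) := mul_le_mul_right h1 4
    have h3 : (4:ℝ≥0∞) * (1 / 4 * (k:ℝ≥0∞) ^ (n + 1)) = (k:ℝ≥0∞) ^ (n + 1) := by
      rw [one_div, ← mul_assoc, ENNReal.mul_inv_cancel (by norm_num) (by norm_num), one_mul]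
    rw [h3] at h2
    exact_mod_cast h2
  have hL1 : 4 * (∑ σ : Fin k → Bool, ∑ w : Fin n → Fin k, N σ w) ≤ 2 ^ k * k ^ (n + 1) := by
    rw [Finset.mul_sum]
    calc ∑ σ : Fin k → Bool, 4 * ∑ w : Fin n → Fin k, N σ w
        ≤ ∑ _σ : Fin k → Bool, k ^ (n + 1) := Finset.sum_le_sum fun σ _ => hS σ
      _ = 2 ^ k * k ^ (n + 1) := by
          rw [Finset.sum_const, smul_eq_mul, Finset.card_univ, Fintype.card_fun,
            Fintype.card_bool, Fintype.card_fin]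
  have hL2 : k ^ n * ((n + 2) * 2 ^ (2 * n + 1))
      ≤ ∑ σ : Fin k → Bool, ∑ w : Fin n → Fin k, N σ w := by
    rw [Finset.sum_comm]
    calc k ^ n * ((n + 2) * 2 ^ (2 * n + 1))
        = ∑ _w : Fin n → Fin k, (n + 2) * 2 ^ (2 * n + 1) := by
          rw [Finset.sum_const, smul_eq_mul, Finset.card_univ, Fintype.card_fun,
            Fintype.card_fin, Fintype.card_fin]
      _ ≤ ∑ w : Fin n → Fin k, ∑ σ : Fin k → Bool, N σ w :=
          Finset.sum_le_sum fun w _ => hcount w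
  have hfin : (2 ^ (2 * n + 1) * k ^ n) * (4 * (n + 2))
      ≤ (2 ^ (2 * n + 1) * k ^ n) * (2 * (2 * n + 2)) := by
    have e1 : (2 ^ (2 * n + 1) * k ^ n) * (4 * (n + 2))
        = 4 * (k ^ n * ((n + 2) * 2 ^ (2 * n + 1))) := by ring
    have e2 : (2 ^ (2 * n + 1) * k ^ n) * (2 * (2 * n + 2)) = 2 ^ k * k ^ (n + 1) := by
      rw [hk]; ring
    rw [e1, e2]
    exact le_trans (Nat.mul_le_mul_left 4 hL2) hL1
  have hApos : 0 < 2 ^ (2 * n + 1) * k ^ n := by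
    rw [hk]; positivity
  have hcancel : 4 * (n + 2) ≤ 2 * (2 * n + 2) := Nat.le_of_mul_le_mul_left hfin hApos
  have h8 : 4 * n + 8 ≤ 4 * n + 4 := by
    calc 4 * n + 8 = 4 * (n + 2) := by ring
      _ ≤ 2 * (2 * n + 2) := hcancel
      _ = 4 * n + 4 := by ring
  have h9 : (8:ℕ) ≤ 4 := Nat.le_of_add_le_add_left h8
  norm_num at h9
end
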